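/- Let H be a hypothesis class, and suppose that for every k ∈ ℕ there exists a finite labeled set S with L_S(H) > 0, yet every subset of S of size less than k is realizable by H (the dual Helly number of H is infinite). Then there exist infinitely many m ∈ ℕ for which there is a probability distribution D on labeled examples such that L_D(H) ≥ 1/(m+1), while every i.i.d. sample of m examples from D is realizable by H with probability 1. -/
import Mathlib


open Classical in
/-- Empirical loss of a hypothesis class on a finite set of labeled examples. -/
noncomputable def floss {X : Type*} (S : Finset (X × Bool)) (H : Set (X → Bool)) : ℝ :=
  sInf ((fun h => ((S.filter (fun p => h p.1 ≠ p.2)).card : ℝ) / (S.card : ℝ)) '' H)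

/-- Population loss of a hypothesis class on a distribution of labeled examples. -/
noncomputable def lossD {X : Type*} (D : PMF (X × Bool)) (H : Set (X → Bool)) : ℝ :=
  sInf ((fun h => (D.toOuterMeasure {p | h p.1 ≠ p.2}).toReal) '' H)

/-- If the dual Helly number of `H` is infinite (for every `k` there is a non-realizable finite
set all of whose subsets of size < k are realizable), then for infinitely many `m` there is a
distribution `D` with `L_D(H) ≥ 1/(m+1)` while every i.i.d. sample of `m` examples from `D`
is realizable by `H` with probability 1. -/
theorem stmt12 {X : Type*} (H : Set (X → Bool))
    (hinf : ∀ k : ℕ, ∃ S : Finset (X × Bool), 0 < floss S H ∧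
      ∀ S' ⊆ S, S'.card < k → ∃ h ∈ H, ∀ p ∈ S', h p.1 = p.2) :
    {m : ℕ | ∃ D : PMF (X × Bool),
      1 / ((m : ℝ) + 1) ≤ lossD D H ∧
      ∀ v : Fin m → X × Bool, (∀ i, v i ∈ D.support) →
        ∃ h ∈ H, ∀ i, h (v i).1 = (v i).2}.Infinite := by
  classical
  -- H is nonempty
  have hHne : H.Nonempty := by
    obtain ⟨S₀, hS₀, -⟩ := hinf 0
    by_contra hH
    rw [Set.not_nonempty_iff_eq_empty] at hH
    simp [floss, hH, Real.sInf_empty] at hS₀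
  -- key step: for every N there is m ≥ N in the set
  have key : ∀ N : ℕ, ∃ m ≥ N, m ∈ {m : ℕ | ∃ D : PMF (X × Bool),
      1 / ((m : ℝ) + 1) ≤ lossD D H ∧
      ∀ v : Fin m → X × Bool, (∀ i, v i ∈ D.support) →
        ∃ h ∈ H, ∀ i, h (v i).1 = (v i).2} := by
    intro N
    obtain ⟨S, hpos, hreal⟩ := hinf (N + 1)
    -- S is "bad": every hypothesis errs on some point of S
    have hSbad : ∀ h ∈ H, ∃ p ∈ S, h p.1 ≠ p.2 := by
      intro h hh
      have hmem : ((S.filter (fun p => h p.1 ≠ p.2)).card : ℝ) / (S.card : ℝ) ∈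
          ((fun h => ((S.filter (fun p => h p.1 ≠ p.2)).card : ℝ) / (S.card : ℝ)) '' H) :=
        ⟨h, hh, rfl⟩
      have hbdd : BddBelow ((fun h => ((S.filter (fun p => h p.1 ≠ p.2)).card : ℝ) / (S.card : ℝ)) '' H) := by
        refine ⟨0, fun x hx => ?_⟩
        obtain ⟨g, -, rfl⟩ := hx
        positivity
      have hle := csInf_le hbdd hmem
      have hgt : (0:ℝ) < ((S.filter (fun p => h p.1 ≠ p.2)).card : ℝ) / (S.card : ℝ) :=
        lt_of_lt_of_le hpos hle
      have hcard : 0 < (S.filter (fun p => h p.1 ≠ p.2)).card := by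
        by_contra hc
        push_neg at hc
        interval_cases hcc : (S.filter (fun p => h p.1 ≠ p.2)).card
        · simp [hcc] at hgt
      obtain ⟨p, hp⟩ := Finset.card_pos.mp hcard
      rw [Finset.mem_filter] at hp
      exact ⟨p, hp.1, hp.2⟩
    -- pick a minimal bad subset of S
    have hne : ((S.powerset).filter (fun T => ∀ h ∈ H, ∃ p ∈ T, h p.1 ≠ p.2)).Nonempty :=
      ⟨S, by simp only [Finset.mem_filter, Finset.mem_powerset]; exact ⟨le_refl S, hSbad⟩⟩
    obtain ⟨T, hTmem, hTmin⟩ := Finset.exists_min_image _ Finset.card hne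
    rw [Finset.mem_filter, Finset.mem_powerset] at hTmem
    obtain ⟨hTS, hTbad⟩ := hTmem
    -- any subset of S of smaller card is realizable
    have hsmall : ∀ T' ⊆ S, T'.card < T.card → ∃ h ∈ H, ∀ p ∈ T', h p.1 = p.2 := by
      intro T' hT'S hT'c
      by_contra hc
      push_neg at hc
      have hbad' : ∀ h ∈ H, ∃ p ∈ T', h p.1 ≠ p.2 := by
        intro h hh
        obtain ⟨p, hp1, hp2⟩ := hc h hh
        exact ⟨p, hp1, hp2⟩
      have := hTmin T' (by rw [Finset.mem_filter, Finset.mem_powerset]; exact ⟨hT'S, hbad'⟩)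
      omega
    -- T has card ≥ N+1
    have hTcard : N + 1 ≤ T.card := by
      by_contra hc
      push_neg at hc
      obtain ⟨h, hh, hhr⟩ := hreal T hTS hc
      obtain ⟨p, hp1, hp2⟩ := hTbad h hh
      exact hp2 (hhr p hp1)
    have hTne : T.Nonempty := Finset.card_pos.mp (by omega)
    refine ⟨T.card - 1, by omega, ?_⟩
    set m := T.card - 1 with hm
    have hm1 : (m : ℝ) + 1 = (T.card : ℝ) := by
      have : m + 1 = T.card := by omega
      push_cast [← this]; ring
    refine ⟨PMF.uniformOfFinset T hTne, ?_, ?_⟩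
    · -- loss lower bound
      apply le_csInf (hHne.image _)
      rintro b ⟨h, hh, rfl⟩
      obtain ⟨p, hpT, hperr⟩ := hTbad h hh
      set D := PMF.uniformOfFinset T hTne with hD
      have hsub : {p} ⊆ {q : X × Bool | h q.1 ≠ q.2} := by
        intro q hq; simp only [Set.mem_singleton_iff] at hq; simpa [hq] using hperr
      have hmono : D.toOuterMeasure {p} ≤ D.toOuterMeasure {q : X × Bool | h q.1 ≠ q.2} :=
        D.toOuterMeasure.mono hsub
      have hsing : D.toOuterMeasure {p} = (T.card : ENNReal)⁻¹ := by
        rw [PMF.toOuterMeasure_apply_singleton, hD, PMF.uniformOfFinset_apply_of_mem _ hpT]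
      have hfin : D.toOuterMeasure {q : X × Bool | h q.1 ≠ q.2} ≠ ⊤ := by
        have : D.toOuterMeasure {q : X × Bool | h q.1 ≠ q.2} ≤ 1 := by
          rw [← PMF.toOuterMeasure_apply_eq_one_iff (s := Set.univ) (p := D) |>.mpr (Set.subset_univ _)]
          exact D.toOuterMeasure.mono (Set.subset_univ _)
        exact ne_top_of_le_ne_top ENNReal.one_ne_top this
      have := ENNReal.toReal_mono hfin hmono
      rw [hsing] at this
      have hcval : ((T.card : ENNReal)⁻¹).toReal = 1 / (T.card : ℝ) := by
        rw [ENNReal.toReal_inv]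
        simp
      rw [hcval] at this
      calc 1 / ((m : ℝ) + 1) = 1 / (T.card : ℝ) := by rw [hm1]
        _ ≤ _ := this
    · -- samples realizable
      intro v hv
      have hvT : ∀ i, v i ∈ T := by
        intro i
        have := hv i
        rwa [PMF.support_uniformOfFinset, Finset.mem_coe] at this
      set T' := Finset.image v Finset.univ with hT'
      have hT'S : T' ⊆ S := by
        intro q hq
        rw [hT', Finset.mem_image] at hq
        obtain ⟨i, -, rfl⟩ := hq
        exact hTS (hvT i)
      have hT'c : T'.card < T.card := by
        have h1 : T'.card ≤ m := le_trans (Finset.card_image_le) (by simp)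
        omega
      obtain ⟨h, hh, hr⟩ := hsmall T' hT'S hT'c
      exact ⟨h, hh, fun i => hr (v i) (by rw [hT', Finset.mem_image]; exact ⟨i, Finset.mem_univ i, rfl⟩)⟩
  -- conclude infinite
  by_contra hfin
  rw [Set.not_infinite] at hfin
  obtain ⟨b, hb⟩ := hfin.bddAbove
  obtain ⟨m, hmN, hmmem⟩ := key (b + 1)
  have := hb hmmem
  omega
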